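/- arXiv:2011.11843 — 6 statements merged into one kernel-verified Lean document; each statement's English description precedes it below -/
import Mathlib

section
/- Let F = (f¹,…,fⁿ) : ℝⁿ → ℝⁿ be a polynomial map with nowhere zero Jacobian determinant such that F(0,…,0) = (0,…,0). Let s = (s₁,…,sₙ) be positive integers, and suppose for each i the component f^i is written as f^i = Σ_{l=1}^{m_i} f^i_l, where each f^i_l is quasi-homogeneous of weighted degree l with respect to s and the top part f^i_{m_i} is not identically zero. If the system f¹_{m_1}(x) = ⋯ = fⁿ_{m_n}(x) = 0 has only the trivial solution x = 0 in ℝⁿ, then F is injective. -/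
/-!
By the inverse function theorem the polynomial map `F` is a local homeomorphism. It is also
proper: write `x ≠ 0` as the weighted dilation `x = δ_t u` with `t = ρ x` and `ρ u = 1`, where
`ρ x = ∑ⱼ |xⱼ| ^ (1 / sⱼ)` is homogeneous of degree one for the dilations. On the compact
"weighted sphere" `{ρ = 1}` the top parts have no common zero, so `∑ᵢ |fⁱ_{mᵢ}|` is bounded below
by some `c > 0`, while all the `fⁱ_l` are bounded; since `fⁱ(δ_t u) = ∑_l t ^ l fⁱ_l(u)`, this
gives `∑ᵢ |fⁱ(x)| ≥ c ρ(x) - B` once `ρ(x) ≥ 1`. A proper local homeomorphism `ℝⁿ → ℝⁿ` is a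
covering map, and a covering of the simply connected `ℝⁿ` by a path-connected space is injective.
-/

open MvPolynomial Filter Finset

namespace MvPolynomial

variable {𝕜 : Type*} [NontriviallyNormedField 𝕜] {σ : Type*} [Fintype σ]

noncomputable def fderivEval (p : MvPolynomial σ 𝕜) (x : σ → 𝕜) : (σ → 𝕜) →L[𝕜] 𝕜 :=
  ∑ j, eval x (pderiv j p) • ContinuousLinearMap.proj j

@[simp]
theorem fderivEval_apply (p : MvPolynomial σ 𝕜) (x v : σ → 𝕜) :
    fderivEval p x v = ∑ j, eval x (pderiv j p) * v j := by
  simp [fderivEval]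

theorem hasStrictFDerivAt_eval (p : MvPolynomial σ 𝕜) (x : σ → 𝕜) :
    HasStrictFDerivAt (fun y => eval y p) (fderivEval p x) x := by
  classical
  induction p using MvPolynomial.induction_on with
  | C a =>
    have hzero : fderivEval (C a) x = 0 := by ext; simp
    simpa [hzero] using hasStrictFDerivAt_const a x
  | add p q hp hq =>
    have hadd : fderivEval (p + q) x = fderivEval p x + fderivEval q x := by
      ext; simp [add_mul, sum_add_distrib]
    rw [hadd]
    simp only [map_add]
    exact hp.add hq
  | mul_X p i hp =>
    have hmul : fderivEval (p * X i) x =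
        eval x p • ContinuousLinearMap.proj i + x i • fderivEval p x := by
      ext v
      simp [Pi.single_apply, apply_ite, add_mul, sum_add_distrib, mul_sum, mul_assoc]
    rw [hmul]
    simp only [map_mul, eval_X]
    exact hp.mul (hasStrictFDerivAt_apply i x)

theorem isLocalHomeomorph_eval_of_det_ne_zero [CompleteSpace 𝕜] [DecidableEq σ]
    (f : σ → MvPolynomial σ 𝕜)
    (hJ : ∀ x : σ → 𝕜, (Matrix.of fun i j => eval x (pderiv j (f i))).det ≠ 0) :
    IsLocalHomeomorph (fun x i => eval x (f i)) := by
  intro x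
  set D : (σ → 𝕜) →L[𝕜] (σ → 𝕜) := ContinuousLinearMap.pi fun i => fderivEval (f i) x
  have hD : D.det ≠ 0 := by
    rw [ContinuousLinearMap.det, ← LinearMap.det_toMatrix']
    convert hJ x using 2
    ext i j
    simp [D, LinearMap.toMatrix'_apply, Pi.single_apply]
  have hF : HasStrictFDerivAt (fun x i => eval x (f i))
      (D.toContinuousLinearEquivOfDetNeZero hD : (σ → 𝕜) →L[𝕜] (σ → 𝕜)) x := by
    rw [ContinuousLinearMap.coe_toContinuousLinearEquivOfDetNeZero]
    exact hasStrictFDerivAt_pi.2 fun i => hasStrictFDerivAt_eval (f i) x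
  exact ⟨hF.toOpenPartialHomeomorph _, hF.mem_toOpenPartialHomeomorph_source,
    hF.toOpenPartialHomeomorph_coe.symm⟩

end MvPolynomial

section Covering

variable {E X : Type*} [TopologicalSpace E] [TopologicalSpace X] {f : E → X}

theorem IsCoveringMap.of_isProperMap_of_isLocalHomeomorph [T2Space E] (hproper : IsProperMap f)
    (hlocal : IsLocalHomeomorph f) : IsCoveringMap f := by
  have hchart : ∀ e, ∃ φ : OpenPartialHomeomorph E X, e ∈ φ.source ∧ ⇑φ = f := fun e =>
    (hlocal e).imp fun _ h => ⟨h.1, h.2.symm⟩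
  rw [isCoveringMap_iff_isCoveringMapOn_univ]
  refine hproper.isClosedMap.isCoveringMapOn_of_isLocalHomeomorphOn (fun x _ => ?_) ?_
  · exact (hproper.isCompact_preimage isCompact_singleton).finite
      (.of_openPartialHomeomorph f subset_rfl fun e _ => hchart e)
  · exact (isLocalHomeomorph_iff_isLocalHomeomorphOn_univ.1 hlocal).mono (Set.subset_univ _)

theorem IsCoveringMap.injective [PathConnectedSpace E] [SimplyConnectedSpace X]
    (hf : IsCoveringMap f) : Function.Injective f := by
  intro e₀ e₁ he
  -- `f ∘ γ` is a null-homotopic loop, so its lift `γ` from `e₀` ends where the constant lift does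
  let γ : Path e₀ e₁ := PathConnectedSpace.somePath e₀ e₁
  let loop : Path (f e₀) (f e₀) := (γ.map hf.continuous).cast rfl he
  have hloop : (loop : C(unitInterval, X)).HomotopicRel (ContinuousMap.const _ (f e₀)) {0, 1} :=
    SimplyConnectedSpace.paths_homotopic loop (Path.refl _)
  have key := hf.liftPath_apply_one_eq_of_homotopicRel hloop e₀ loop.source rfl
  rw [hf.liftPath_const rfl] at key
  have hlift : (γ : C(unitInterval, E)) = hf.liftPath loop e₀ loop.source :=
    (hf.eq_liftPath_iff' _).2 ⟨rfl, γ.source⟩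
  rw [← hlift] at key
  simpa using key.symm

end Covering

theorem sub_sum_abs_le_abs_sum_pow_mul {m : ℕ} (hm : m ≠ 0) {t : ℝ} (ht : 1 ≤ t) (a : ℕ → ℝ) :
    t * |a m| - ∑ l ∈ Icc 1 m, |a l| ≤ |∑ l ∈ Icc 1 m, t ^ l * a l| := by
  obtain ⟨k, rfl⟩ := Nat.exists_eq_succ_of_ne_zero hm
  rw [sum_Icc_succ_top (by omega), sum_Icc_succ_top (by omega)]
  set T := ∑ l ∈ Icc 1 k, |a l|
  have hlower : |∑ l ∈ Icc 1 k, t ^ l * a l| ≤ t ^ k * T := by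
    calc _ ≤ ∑ l ∈ Icc 1 k, |t ^ l * a l| := abs_sum_le_sum_abs _ _
      _ ≤ ∑ l ∈ Icc 1 k, t ^ k * |a l| := by
        gcongr with l hl
        rw [abs_mul, abs_of_nonneg (by positivity)]
        gcongr
        exact (mem_Icc.1 hl).2
      _ = t ^ k * T := (mul_sum ..).symm
  have htop : |t ^ (k + 1) * a (k + 1)| = t ^ k * (t * |a (k + 1)|) := by
    rw [abs_mul, abs_of_nonneg (by positivity), pow_succ, mul_assoc]
  have htk : 1 ≤ t ^ k := one_le_pow₀ ht
  have hreverse := abs_add_le (∑ l ∈ Icc 1 k, t ^ l * a l + t ^ (k + 1) * a (k + 1))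
    (-∑ l ∈ Icc 1 k, t ^ l * a l)
  rw [abs_neg, add_neg_cancel_comm, htop] at hreverse
  -- the sum is at least `t ^ k * (t * |a (k + 1)| - T)`, and `1 ≤ t ^ k`
  nlinarith [abs_nonneg (a (k + 1)),
    abs_nonneg (∑ l ∈ Icc 1 k, t ^ l * a l + t ^ (k + 1) * a (k + 1))]

theorem tendsto_cocompact_pi_of_tendsto_sum_abs {α κ : Type*} [Fintype κ] {l : Filter α}
    {G : α → κ → ℝ} (h : Tendsto (fun x => ∑ i, |G x i|) l atTop) :
    Tendsto G l (cocompact (κ → ℝ)) := by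
  rw [← Metric.cobounded_eq_cocompact, ← tendsto_norm_atTop_iff_cobounded]
  refine .atTop_of_const_mul₀ (c := Fintype.card κ + 1) (by positivity)
    (tendsto_atTop_mono (fun x => ?_) h)
  have hsum := sum_le_card_nsmul univ (fun i => |G x i|) ‖G x‖ fun i _ => norm_le_pi_norm (G x) i
  rw [card_univ, nsmul_eq_mul] at hsum
  nlinarith [norm_nonneg (G x)]

section WeightedDilation

variable {ι : Type*}

def weightedDilation (s : ι → ℕ) (t : ℝ) (x : ι → ℝ) : ι → ℝ := fun j => t ^ s j * x j

def IsQuasiHomogeneous (s : ι → ℕ) (l : ℕ) (g : (ι → ℝ) → ℝ) : Prop :=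
  ∀ t : ℝ, 0 < t → ∀ x, g (weightedDilation s t x) = t ^ l * g x

variable {s : ι → ℕ}

theorem weightedDilation_weightedDilation (a b : ℝ) (x : ι → ℝ) :
    weightedDilation s a (weightedDilation s b x) = weightedDilation s (a * b) x := by
  ext j
  simp only [weightedDilation, mul_pow, mul_assoc]

theorem weightedDilation_one (x : ι → ℝ) : weightedDilation s 1 x = x := by
  ext j
  simp [weightedDilation]

theorem sub_sum_abs_le_abs_sum_weightedDilation {m : ℕ} (hm : m ≠ 0)
    {g : ℕ → (ι → ℝ) → ℝ} (hg : ∀ l ∈ Icc 1 m, IsQuasiHomogeneous s l (g l))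
    {t : ℝ} (ht : 1 ≤ t) (u : ι → ℝ) :
    t * |g m u| - ∑ l ∈ Icc 1 m, |g l u| ≤ |∑ l ∈ Icc 1 m, g l (weightedDilation s t u)| := by
  rw [sum_congr rfl fun l hl => hg l hl t (by positivity) u]
  exact sub_sum_abs_le_abs_sum_pow_mul hm ht fun l => g l u

variable [Fintype ι]

noncomputable def weightedGauge (s : ι → ℕ) (x : ι → ℝ) : ℝ := ∑ j, |x j| ^ ((s j : ℝ)⁻¹)

theorem weightedGauge_zero (hs : ∀ j, s j ≠ 0) : weightedGauge s (0 : ι → ℝ) = 0 := by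
  simp [weightedGauge, hs]

theorem continuous_weightedGauge : Continuous (weightedGauge (ι := ι) s) :=
  continuous_finsetSum _ fun j _ =>
    (Real.continuous_rpow_const (by positivity)).comp (continuous_apply j).abs

theorem weightedGauge_weightedDilation (hs : ∀ j, s j ≠ 0) {t : ℝ} (ht : 0 ≤ t) (x : ι → ℝ) :
    weightedGauge s (weightedDilation s t x) = t * weightedGauge s x := by
  simp only [weightedGauge, weightedDilation, mul_sum, abs_mul, abs_pow, abs_of_nonneg ht]
  refine sum_congr rfl fun j _ => ?_
  rw [Real.mul_rpow (by positivity) (abs_nonneg _), Real.pow_rpow_inv_natCast ht (hs j)]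

theorem abs_le_pow_of_weightedGauge_le (hs : ∀ j, s j ≠ 0) {x : ι → ℝ} {R : ℝ}
    (hx : weightedGauge s x ≤ R) (j : ι) : |x j| ≤ R ^ s j := by
  have hj : |x j| ^ ((s j : ℝ)⁻¹) ≤ R :=
    (single_le_sum (f := fun j => |x j| ^ ((s j : ℝ)⁻¹)) (fun j _ => by positivity)
      (mem_univ j)).trans hx
  calc |x j| = (|x j| ^ ((s j : ℝ)⁻¹)) ^ s j :=
        (Real.rpow_inv_natCast_pow (abs_nonneg _) (hs j)).symm
    _ ≤ R ^ s j := by gcongr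

theorem isCompact_weightedGauge_le (hs : ∀ j, s j ≠ 0) (R : ℝ) :
    IsCompact {x : ι → ℝ | weightedGauge s x ≤ R} :=
  (isCompact_univ_pi fun j => isCompact_Icc (a := -R ^ s j) (b := R ^ s j)).of_isClosed_subset
    (isClosed_le continuous_weightedGauge continuous_const) fun _ hx j _ =>
      abs_le.1 (abs_le_pow_of_weightedGauge_le hs hx j)

theorem tendsto_weightedGauge_cocompact (hs : ∀ j, s j ≠ 0) :
    Tendsto (weightedGauge s) (cocompact (ι → ℝ)) atTop :=
  tendsto_atTop.2 fun R => mem_cocompact.2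
    ⟨_, isCompact_weightedGauge_le hs R, fun _ hx => le_of_not_ge (b := R) hx⟩

theorem exists_weightedGauge_eq_one_weightedDilation (hs : ∀ j, s j ≠ 0) {x : ι → ℝ}
    (hx : 0 < weightedGauge s x) :
    ∃ u, weightedGauge s u = 1 ∧ weightedDilation s (weightedGauge s x) u = x := by
  refine ⟨weightedDilation s (weightedGauge s x)⁻¹ x, ?_, ?_⟩
  · rw [weightedGauge_weightedDilation hs (by positivity), inv_mul_cancel₀ hx.ne']
  · rw [weightedDilation_weightedDilation, mul_inv_cancel₀ hx.ne', weightedDilation_one]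

variable {κ : Type*} [Fintype κ]

theorem exists_mul_weightedGauge_sub_le_sum_abs (hs : ∀ j, s j ≠ 0) {m : κ → ℕ}
    (hm : ∀ i, m i ≠ 0) {g : κ → ℕ → (ι → ℝ) → ℝ} (hcont : ∀ i l, Continuous (g i l))
    (hqh : ∀ i, ∀ l ∈ Icc 1 (m i), IsQuasiHomogeneous s l (g i l))
    (htop : ∀ x, (∀ i, g i (m i) x = 0) → x = 0) :
    ∃ c > 0, ∃ B, ∀ x, 1 ≤ weightedGauge s x →
      c * weightedGauge s x - B ≤ ∑ i, |∑ l ∈ Icc 1 (m i), g i l x| := by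
  set S := {u : ι → ℝ | weightedGauge s u = 1}
  have hS : IsCompact S := (isCompact_weightedGauge_le hs 1).of_isClosed_subset
    (isClosed_eq continuous_weightedGauge continuous_const) fun u hu => hu.le
  have htop_pos : ∀ u ∈ S, 0 < ∑ i, |g i (m i) u| := fun u hu => by
    refine (sum_nonneg fun i _ => abs_nonneg _).lt_of_ne' fun hzero => ?_
    have hu0 : u = 0 := htop u fun i => abs_eq_zero.1 <|
      (sum_eq_zero_iff_of_nonneg fun i _ => abs_nonneg _).1 hzero i (mem_univ i)
    have hu1 : weightedGauge s u = 1 := hu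
    rw [hu0, weightedGauge_zero hs] at hu1
    exact zero_ne_one hu1
  obtain ⟨c, hc, hcS⟩ := hS.exists_forall_le'
    (continuous_finsetSum _ fun i _ => (hcont i (m i)).abs).continuousOn htop_pos
  obtain ⟨B, hB⟩ := hS.exists_bound_of_continuousOn
    (f := fun u => ∑ i, ∑ l ∈ Icc 1 (m i), |g i l u|)
    (continuous_finsetSum _ fun i _ => continuous_finsetSum _ fun l _ =>
      (hcont i l).abs).continuousOn
  refine ⟨c, hc, B, fun x hx => ?_⟩
  obtain ⟨u, hu, hxu⟩ :=
    exists_weightedGauge_eq_one_weightedDilation hs (one_pos.trans_le hx)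
  set t := weightedGauge s x
  rw [← hxu]
  calc c * t - B ≤ t * ∑ i, |g i (m i) u| - ∑ i, ∑ l ∈ Icc 1 (m i), |g i l u| := by
        have := (le_abs_self _).trans (hB u hu)
        nlinarith [hcS u hu]
    _ = ∑ i, (t * |g i (m i) u| - ∑ l ∈ Icc 1 (m i), |g i l u|) := by
        rw [mul_sum, sum_sub_distrib]
    _ ≤ _ := sum_le_sum fun i _ =>
        sub_sum_abs_le_abs_sum_weightedDilation (hm i) (hqh i) hx u

theorem tendsto_cocompact_of_isQuasiHomogeneous (hs : ∀ j, s j ≠ 0) {m : κ → ℕ}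
    (hm : ∀ i, m i ≠ 0) {g : κ → ℕ → (ι → ℝ) → ℝ} (hcont : ∀ i l, Continuous (g i l))
    (hqh : ∀ i, ∀ l ∈ Icc 1 (m i), IsQuasiHomogeneous s l (g i l))
    (htop : ∀ x, (∀ i, g i (m i) x = 0) → x = 0) :
    Tendsto (fun x i => ∑ l ∈ Icc 1 (m i), g i l x) (cocompact (ι → ℝ)) (cocompact (κ → ℝ)) := by
  obtain ⟨c, hc, B, hgrowth⟩ :=
    exists_mul_weightedGauge_sub_le_sum_abs hs hm hcont hqh htop
  have hgauge := tendsto_weightedGauge_cocompact hs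
  refine tendsto_cocompact_pi_of_tendsto_sum_abs <| tendsto_atTop_mono' _ ?_
    (tendsto_atTop_add_const_right _ (-B) (hgauge.const_mul_atTop hc))
  filter_upwards [hgauge.eventually_ge_atTop 1] with x hx
  linarith [hgrowth x hx]

end WeightedDilation

theorem cima_quasi_homogeneous_injective_general (n : ℕ) (f : Fin n → MvPolynomial (Fin n) ℝ)
    (hJ : ∀ x : Fin n → ℝ,
      Matrix.det (Matrix.of fun i j : Fin n =>
        MvPolynomial.eval x (MvPolynomial.pderiv j (f i))) ≠ 0)
    (s : Fin n → ℕ) (hs : ∀ j, 0 < s j)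
    (m : Fin n → ℕ) (fc : Fin n → ℕ → MvPolynomial (Fin n) ℝ)
    (hdecomp : ∀ i, f i = ∑ l ∈ Finset.Icc 1 (m i), fc i l)
    (hqh : ∀ i, ∀ l ∈ Finset.Icc 1 (m i), ∀ lam : ℝ, 0 < lam → ∀ x : Fin n → ℝ,
      MvPolynomial.eval (fun j => lam ^ s j * x j) (fc i l) =
        lam ^ l * MvPolynomial.eval x (fc i l))
    (hsol : ∀ x : Fin n → ℝ, (∀ i, MvPolynomial.eval x (fc i (m i)) = 0) → x = 0) :
    Function.Injective (fun (x : Fin n → ℝ) (i : Fin n) => MvPolynomial.eval x (f i)) := by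
  have hm : ∀ i, m i ≠ 0 := by
    intro i hmi
    refine hJ 0 (Matrix.det_eq_zero_of_row_eq_zero i fun j => ?_)
    simp [hdecomp i, hmi]
  have hF : (fun (x : Fin n → ℝ) (i : Fin n) => MvPolynomial.eval x (f i)) =
      fun x i => ∑ l ∈ Finset.Icc 1 (m i), MvPolynomial.eval x (fc i l) := by
    funext x i
    simp [hdecomp i]
  have hproper : IsProperMap fun (x : Fin n → ℝ) (i : Fin n) => MvPolynomial.eval x (f i) := by
    refine isProperMap_iff_tendsto_cocompact.2 ⟨continuous_pi fun i => continuous_eval _, ?_⟩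
    rw [hF]
    exact tendsto_cocompact_of_isQuasiHomogeneous (fun j => (hs j).ne') hm
      (fun i l => continuous_eval _) hqh hsol
  exact (IsCoveringMap.of_isProperMap_of_isLocalHomeomorph hproper
    (isLocalHomeomorph_eval_of_det_ne_zero f hJ)).injective

/-- **Cima's theorem.** Let `F = (f¹,…,fⁿ) : ℝⁿ → ℝⁿ` be a polynomial map with
nowhere zero Jacobian determinant and `F(0) = 0`. Let `s = (s₁,…,sₙ)` be positive integers and
suppose each `fⁱ = Σ_{l=1}^{mᵢ} fⁱ_l` with `fⁱ_l` quasi-homogeneous of weighted degree `l`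
with respect to `s` and the top part `fⁱ_{mᵢ}` not identically zero. If the system
`f¹_{m₁}(x) = ⋯ = fⁿ_{mₙ}(x) = 0` has only the trivial solution `x = 0`, then `F` is
injective. -/
theorem cima_quasi_homogeneous_injective (n : ℕ) (f : Fin n → MvPolynomial (Fin n) ℝ)
    (hJ : ∀ x : Fin n → ℝ,
      Matrix.det (Matrix.of fun i j : Fin n =>
        MvPolynomial.eval x (MvPolynomial.pderiv j (f i))) ≠ 0)
    (h0 : ∀ i, MvPolynomial.eval (0 : Fin n → ℝ) (f i) = 0)
    (s : Fin n → ℕ) (hs : ∀ j, 0 < s j)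
    (m : Fin n → ℕ) (fc : Fin n → ℕ → MvPolynomial (Fin n) ℝ)
    (hdecomp : ∀ i, f i = ∑ l ∈ Finset.Icc 1 (m i), fc i l)
    (hqh : ∀ i, ∀ l ∈ Finset.Icc 1 (m i), ∀ lam : ℝ, 0 < lam → ∀ x : Fin n → ℝ,
      MvPolynomial.eval (fun j => lam ^ s j * x j) (fc i l) =
        lam ^ l * MvPolynomial.eval x (fc i l))
    (htop : ∀ i, fc i (m i) ≠ 0)
    (hsol : ∀ x : Fin n → ℝ, (∀ i, MvPolynomial.eval x (fc i (m i)) = 0) → x = 0) :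
    Function.Injective (fun (x : Fin n → ℝ) (i : Fin n) => MvPolynomial.eval x (f i)) :=
  cima_quasi_homogeneous_injective_general n f hJ s hs m fc hdecomp hqh hsol
end

section
/- Let F = (f,g) : ℝ² → ℝ² be a polynomial map with nowhere zero Jacobian determinant such that F(0,0) = (0,0). If there exists a real number L such that 1/(f(x,y)² + g(x,y)²) → L as |x| + |y| → +∞, then L = 0. -/
/-!
If `L ≠ 0`, then `f² + g²` tends to `L⁻¹` at infinity. Restricted to a horizontal line it is a
one-variable polynomial with a finite limit at `+∞`, hence constant; so `f² + g²` is constantly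
`L⁻¹`, contradicting its value `0` at the origin.
-/

open MvPolynomial Filter Topology

theorem Polynomial.eval_eq_of_tendsto_atTop {𝕜 : Type*} [NormedField 𝕜] [LinearOrder 𝕜]
    [IsStrictOrderedRing 𝕜] [OrderTopology 𝕜] {P : Polynomial 𝕜} {c : 𝕜}
    (h : Tendsto (fun x => P.eval x) atTop (𝓝 c)) (x : 𝕜) : P.eval x = c := by
  have hconst := Polynomial.eq_C_of_degree_le_zero (P.tendsto_nhds_iff.mp h).2
  rw [hconst] at h ⊢
  simpa using h

theorem MvPolynomial.polynomial_eval_aeval {σ R : Type*} [CommSemiring R]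
    (v : σ → Polynomial R) (p : MvPolynomial σ R) (t : R) :
    (aeval v p).eval t = eval (fun i => (v i).eval t) p := by
  induction p using MvPolynomial.induction_on <;> simp_all

theorem Filter.tendsto_prodMk_const_cocompact {X Y : Type*} [TopologicalSpace X]
    [TopologicalSpace Y] (y : Y) :
    Tendsto (fun x : X => (x, y)) (cocompact X) (cocompact (X × Y)) := by
  rw [← coprod_cocompact]
  have hfst : Tendsto (Prod.fst ∘ fun x : X => (x, y)) (cocompact X) (cocompact X) := tendsto_id
  exact (tendsto_comap_iff.2 hfst).mono_right le_sup_left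

theorem MvPolynomial.eval_eq_of_tendsto_cocompact {p : MvPolynomial (Fin 2) ℝ} {c : ℝ}
    (h : Tendsto (fun q : ℝ × ℝ => eval ![q.1, q.2] p) (cocompact (ℝ × ℝ)) (𝓝 c)) (x y : ℝ) :
    eval ![x, y] p = c := by
  have heval (t : ℝ) : (aeval ![Polynomial.X, Polynomial.C y] p).eval t = eval ![t, y] p := by
    rw [polynomial_eval_aeval]
    congr 2
    funext i; fin_cases i <;> simp
  have hline : Tendsto (fun t : ℝ => eval ![t, y] p) atTop (𝓝 c) :=
    (h.comp (tendsto_prodMk_const_cocompact y) :).mono_left atTop_le_cocompact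
  rw [← heval]
  exact Polynomial.eval_eq_of_tendsto_atTop (by simpa only [heval] using hline) x

theorem limit_of_reciprocal_criterion_is_zero_general (f g : MvPolynomial (Fin 2) ℝ)
    (h0f : eval ![(0 : ℝ), 0] f = 0) (h0g : eval ![(0 : ℝ), 0] g = 0)
    (L : ℝ)
    (hL : Tendsto (fun p : ℝ × ℝ => 1 / ((eval ![p.1, p.2] f) ^ 2 + (eval ![p.1, p.2] g) ^ 2))
      (cocompact (ℝ × ℝ)) (nhds L)) :
    L = 0 := by
  by_contra hL0
  have hsq : Tendsto (fun q : ℝ × ℝ => eval ![q.1, q.2] (f ^ 2 + g ^ 2)) (cocompact (ℝ × ℝ))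
      (𝓝 L⁻¹) := by
    simpa using hL.inv₀ hL0
  have horigin : eval ![(0 : ℝ), 0] (f ^ 2 + g ^ 2) = L⁻¹ := eval_eq_of_tendsto_cocompact hsq 0 0
  rw [map_add, map_pow, map_pow, h0f, h0g] at horigin
  exact hL0 (inv_eq_zero.mp (by simpa using horigin.symm))

/-- Let `F = (f,g) : ℝ² → ℝ²` be a polynomial map with nowhere zero Jacobian
determinant such that `F(0,0) = (0,0)`. If `1/(f(x,y)² + g(x,y)²) → L` as `|x|+|y| → +∞`
(along the cocompact filter of `ℝ²`), then `L = 0`. -/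
theorem limit_of_reciprocal_criterion_is_zero (f g : MvPolynomial (Fin 2) ℝ)
    (hJ : ∀ x y : ℝ,
      eval ![x, y] (pderiv (0 : Fin 2) f) * eval ![x, y] (pderiv (1 : Fin 2) g) -
        eval ![x, y] (pderiv (1 : Fin 2) f) * eval ![x, y] (pderiv (0 : Fin 2) g) ≠ 0)
    (h0f : eval ![(0 : ℝ), 0] f = 0) (h0g : eval ![(0 : ℝ), 0] g = 0)
    (L : ℝ)
    (hL : Tendsto (fun p : ℝ × ℝ => 1 / ((eval ![p.1, p.2] f) ^ 2 + (eval ![p.1, p.2] g) ^ 2))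
      (cocompact (ℝ × ℝ)) (nhds L)) :
    L = 0 :=
  limit_of_reciprocal_criterion_is_zero_general f g h0f h0g L hL
end

section
/- Let f and g be real polynomials in two variables, not both constant, let d = max(deg f, deg g) ≥ 1, and let f_d and g_d be the homogeneous components of degree d of f and g respectively (so that f_d and g_d are not both identically zero). Then there exists θ₀ ∈ [0, 2π] such that f_d(cos θ₀, sin θ₀)² + g_d(cos θ₀, sin θ₀)² ≠ 0, and for every such θ₀ one has f(r cos θ₀, r sin θ₀)² + g(r cos θ₀, r sin θ₀)² → +∞ as r → +∞. -/
/-!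
On the ray `r ↦ r • (cos θ, sin θ)` the polynomial `f` restricts to a polynomial in `r` whose
coefficient of `r ^ k` is `f_k (cos θ, sin θ)`, by homogeneity of `f_k`. If `f_d` or `g_d` does
not vanish at `(cos θ, sin θ)`, one of the two restrictions has positive degree, so its square
tends to `+∞`. Such a direction exists because the nonzero homogeneous polynomial `f_d` (or `g_d`)
is nonzero at some point, hence, again by homogeneity, at some point of the unit circle.
-/

open MvPolynomial Filter Real

namespace MvPolynomial

variable {σ R : Type*} [CommSemiring R]

theorem IsHomogeneous.aeval_smul {S : Type*} [CommSemiring S] [Algebra R S]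
    {φ : MvPolynomial σ R} {n : ℕ} (hφ : φ.IsHomogeneous n) (c : S) (x : σ → S) :
    MvPolynomial.aeval (c • x) φ = c ^ n * MvPolynomial.aeval x φ := by
  conv_lhs => rw [φ.as_sum]
  conv_rhs => rw [φ.as_sum]
  rw [map_sum, map_sum, Finset.mul_sum]
  refine Finset.sum_congr rfl fun m hm => ?_
  have hmn : m.degree = n := by
    rw [Finsupp.degree_eq_weight_one]; exact hφ (mem_support_iff.1 hm)
  have hc : (m.prod fun _ k => c ^ k) = c ^ n := by
    rw [Finsupp.prod, Finset.prod_pow_eq_pow_sum, ← hmn, Finsupp.degree_apply]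
  simp only [aeval_monomial, Pi.smul_apply, smul_eq_mul, mul_pow, Finsupp.prod_mul, hc]
  ring

theorem homogeneousComponent_totalDegree_ne_zero {φ : MvPolynomial σ R}
    (hφ : φ ≠ 0) : homogeneousComponent φ.totalDegree φ ≠ 0 := by
  obtain ⟨m, hm, hmdeg⟩ := Finset.exists_mem_eq_sup _ (support_nonempty.2 hφ)
    fun s => s.sum fun _ e => e
  have hcoeff : coeff m (homogeneousComponent φ.totalDegree φ) = coeff m φ := by
    rw [coeff_homogeneousComponent, if_pos (by rw [totalDegree, hmdeg]; rfl)]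
  exact ne_zero_iff.2 ⟨m, hcoeff ▸ mem_support_iff.1 hm⟩

noncomputable def lineRestriction (x : σ → R) (φ : MvPolynomial σ R) : Polynomial R :=
  aeval (fun i => Polynomial.C (x i) * Polynomial.X) φ

theorem eval_lineRestriction (x : σ → R) (φ : MvPolynomial σ R) (r : R) :
    (lineRestriction x φ).eval r = eval (r • x) φ := by
  rw [lineRestriction, ← Polynomial.coe_aeval_eq_eval, ← AlgHom.comp_apply, comp_aeval]
  simp only [map_mul, Polynomial.aeval_C, Polynomial.aeval_X, Algebra.algebraMap_self,
    RingHom.id_apply, aeval_eq_eval]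
  rw [show (fun i => x i * r) = (r • x : σ → R) by ext i; exact mul_comm (x i) r]

theorem IsHomogeneous.lineRestriction_eq {φ : MvPolynomial σ R} {n : ℕ} (hφ : φ.IsHomogeneous n)
    (x : σ → R) : lineRestriction x φ = Polynomial.C (eval x φ) * Polynomial.X ^ n := by
  have hsmul : (fun i => Polynomial.C (x i) * Polynomial.X) =
      (Polynomial.X : Polynomial R) • (Polynomial.C ∘ x) := by
    ext1 i; exact mul_comm _ _
  rw [lineRestriction, hsmul, hφ.aeval_smul, mul_comm, aeval_def, Polynomial.algebraMap_eq]
  congr 1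
  simpa only [eval₂_id, RingHomCompTriple.comp_eq] using
    (eval₂_comp_left Polynomial.C (RingHom.id R) x φ).symm

theorem lineRestriction_eq_sum (x : σ → R) (φ : MvPolynomial σ R) :
    lineRestriction x φ = ∑ j ∈ Finset.range (φ.totalDegree + 1),
      Polynomial.C (eval x (homogeneousComponent j φ)) * Polynomial.X ^ j := by
  conv_lhs => rw [lineRestriction, ← sum_homogeneousComponent φ, map_sum]
  exact Finset.sum_congr rfl fun j _ =>
    (homogeneousComponent_isHomogeneous j φ).lineRestriction_eq x

theorem coeff_lineRestriction (x : σ → R) (φ : MvPolynomial σ R) (k : ℕ) :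
    (lineRestriction x φ).coeff k = eval x (homogeneousComponent k φ) := by
  rw [lineRestriction_eq_sum, Polynomial.finsetSum_coeff]
  simp only [Polynomial.coeff_C_mul_X_pow, Finset.sum_ite_eq, Finset.mem_range]
  split_ifs with hk
  · rfl
  · rw [homogeneousComponent_eq_zero _ _ (by omega), map_zero]

end MvPolynomial

theorem Polynomial.tendsto_eval_sq_atTop {P : Polynomial ℝ} (hP : 0 < P.degree) :
    Tendsto (fun r => P.eval r ^ 2) atTop atTop := by
  simpa only [Function.comp_def, sq_abs] using
    (tendsto_pow_atTop two_ne_zero).comp (P.abs_tendsto_atTop hP)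

theorem Polynomial.tendsto_eval_sq_add_eval_sq_atTop {P Q : Polynomial ℝ} {d : ℕ} (hd : d ≠ 0)
    (h : P.coeff d ^ 2 + Q.coeff d ^ 2 ≠ 0) :
    Tendsto (fun r => P.eval r ^ 2 + Q.eval r ^ 2) atTop atTop := by
  have of_coeff_ne_zero : ∀ {P Q : Polynomial ℝ}, P.coeff d ≠ 0 →
      Tendsto (fun r => P.eval r ^ 2 + Q.eval r ^ 2) atTop atTop := fun hP =>
    (tendsto_eval_sq_atTop <| (WithBot.coe_pos.2 (Nat.pos_of_ne_zero hd)).trans_le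
      (Polynomial.le_degree_of_ne_zero hP)).atTop_add_nonneg fun _ => sq_nonneg _
  by_cases hP : P.coeff d = 0
  · have hQ : Q.coeff d ≠ 0 := by rintro hQ; simp [hP, hQ] at h
    simpa only [add_comm] using of_coeff_ne_zero (Q := P) hQ
  · exact of_coeff_ne_zero hP

theorem exists_mem_Icc_eq_smul_cos_sin (x : Fin 2 → ℝ) :
    ∃ θ ∈ Set.Icc 0 (2 * π), ∃ ρ : ℝ, x = ρ • ![cos θ, sin θ] := by
  let z : ℂ := ⟨x 0, x 1⟩
  have hx : x = ‖z‖ • ![cos z.arg, sin z.arg] := by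
    ext i; fin_cases i
    · simp [Complex.norm_mul_cos_arg, z]
    · simp [Complex.norm_mul_sin_arg, z]
  rcases le_or_gt 0 z.arg with harg | harg
  · exact ⟨z.arg, ⟨harg, by linarith [z.arg_le_pi, pi_pos]⟩, ‖z‖, hx⟩
  · refine ⟨z.arg + 2 * π, ⟨by linarith [z.neg_pi_lt_arg], by linarith⟩, ‖z‖, ?_⟩
    rwa [cos_add_two_pi, sin_add_two_pi]

theorem MvPolynomial.IsHomogeneous.exists_eval_cos_sin_ne_zero {φ : MvPolynomial (Fin 2) ℝ} {n : ℕ}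
    (hφ : φ.IsHomogeneous n) (hφ0 : φ ≠ 0) :
    ∃ θ ∈ Set.Icc 0 (2 * π), eval ![cos θ, sin θ] φ ≠ 0 := by
  obtain ⟨x, hx⟩ : ∃ x, eval x φ ≠ 0 := by
    by_contra! h
    exact hφ0 (hφ.eq_zero_of_forall_eval_eq_zero h)
  obtain ⟨θ, hθ, ρ, rfl⟩ := exists_mem_Icc_eq_smul_cos_sin x
  rw [show eval (ρ • ![cos θ, sin θ]) φ = ρ ^ n * eval ![cos θ, sin θ] φ from
    hφ.aeval_smul ρ _] at hx
  exact ⟨θ, hθ, right_ne_zero_of_mul hx⟩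

theorem exists_direction_criterion_tendsto_atTop_general (f g : MvPolynomial (Fin 2) ℝ) (d : ℕ)
    (hd : d = max f.totalDegree g.totalDegree) (hd1 : 1 ≤ d) :
    (∃ θ₀ ∈ Set.Icc (0 : ℝ) (2 * π),
      (eval ![Real.cos θ₀, Real.sin θ₀] (homogeneousComponent d f)) ^ 2 +
        (eval ![Real.cos θ₀, Real.sin θ₀] (homogeneousComponent d g)) ^ 2 ≠ 0) ∧
    ∀ θ₀ ∈ Set.Icc (0 : ℝ) (2 * π),
      (eval ![Real.cos θ₀, Real.sin θ₀] (homogeneousComponent d f)) ^ 2 +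
        (eval ![Real.cos θ₀, Real.sin θ₀] (homogeneousComponent d g)) ^ 2 ≠ 0 →
      Tendsto (fun r : ℝ =>
          (eval ![r * Real.cos θ₀, r * Real.sin θ₀] f) ^ 2 +
            (eval ![r * Real.cos θ₀, r * Real.sin θ₀] g) ^ 2)
        atTop atTop := by
  constructor
  · have nonvanishing_direction : ∀ p : MvPolynomial (Fin 2) ℝ, p.totalDegree = d →
        ∃ θ ∈ Set.Icc 0 (2 * π), eval ![cos θ, sin θ] (homogeneousComponent d p) ≠ 0 := by
      rintro p rfl
      have hp : p ≠ 0 := by rintro rfl; simp at hd1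
      exact (homogeneousComponent_isHomogeneous _ _).exists_eval_cos_sin_ne_zero
        (homogeneousComponent_totalDegree_ne_zero hp)
    rcases max_choice f.totalDegree g.totalDegree with h | h
    · obtain ⟨θ, hθ, hf⟩ := nonvanishing_direction f (hd.trans h).symm
      exact ⟨θ, hθ, by positivity⟩
    · obtain ⟨θ, hθ, hg⟩ := nonvanishing_direction g (hd.trans h).symm
      exact ⟨θ, hθ, by positivity⟩
  · intro θ _ h
    simp only [← coeff_lineRestriction] at h
    refine (Polynomial.tendsto_eval_sq_add_eval_sq_atTop (by omega) h).congr fun r => ?_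
    simp only [eval_lineRestriction, Matrix.smul_cons, smul_eq_mul, Matrix.smul_empty]

/-- Let `f, g` be real polynomials in two variables, not both constant, let
`d = max (deg f) (deg g) ≥ 1` and let `f_d`, `g_d` be the homogeneous components of degree `d`.
Then there is `θ₀ ∈ [0, 2π]` with `f_d(cos θ₀, sin θ₀)² + g_d(cos θ₀, sin θ₀)² ≠ 0`, and for
every such `θ₀` the quantity `f(r cos θ₀, r sin θ₀)² + g(r cos θ₀, r sin θ₀)²` tends to `+∞`
as `r → +∞`. -/
theorem exists_direction_criterion_tendsto_atTop (f g : MvPolynomial (Fin 2) ℝ) (d : ℕ)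
    (hconst : ¬ (f.totalDegree = 0 ∧ g.totalDegree = 0))
    (hd : d = max f.totalDegree g.totalDegree) (hd1 : 1 ≤ d) :
    (∃ θ₀ ∈ Set.Icc (0 : ℝ) (2 * π),
      (eval ![Real.cos θ₀, Real.sin θ₀] (homogeneousComponent d f)) ^ 2 +
        (eval ![Real.cos θ₀, Real.sin θ₀] (homogeneousComponent d g)) ^ 2 ≠ 0) ∧
    ∀ θ₀ ∈ Set.Icc (0 : ℝ) (2 * π),
      (eval ![Real.cos θ₀, Real.sin θ₀] (homogeneousComponent d f)) ^ 2 +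
        (eval ![Real.cos θ₀, Real.sin θ₀] (homogeneousComponent d g)) ^ 2 ≠ 0 →
      Tendsto (fun r : ℝ =>
          (eval ![r * Real.cos θ₀, r * Real.sin θ₀] f) ^ 2 +
            (eval ![r * Real.cos θ₀, r * Real.sin θ₀] g) ^ 2)
        atTop atTop :=
  exists_direction_criterion_tendsto_atTop_general f g d hd hd1
end

section
/- Let F = (f,g) : ℝ² → ℝ² be a polynomial map with nowhere zero Jacobian determinant such that F(0,0) = (0,0). Then a point q ∈ ℝ² is a singular point of the Hamiltonian vector field 𝒳 = (−f f_y − g g_y, f f_x + g g_x), i.e. (f f_y + g g_y)(q) = 0 and (f f_x + g g_x)(q) = 0, if and only if f(q) = 0 and g(q) = 0. -/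
open MvPolynomial

/-- Let `F = (f,g) : ℝ² → ℝ²` be a polynomial map with nowhere zero Jacobian
determinant such that `F(0,0) = (0,0)`. Then `q = (x,y)` is a singular point of the Hamiltonian
vector field `𝒳 = (−f f_y − g g_y, f f_x + g g_x)` iff `f(q) = 0` and `g(q) = 0`. -/
theorem singular_point_iff_zero_of_F (f g : MvPolynomial (Fin 2) ℝ)
    (hJ : ∀ x y : ℝ,
      eval ![x, y] (pderiv (0 : Fin 2) f) * eval ![x, y] (pderiv (1 : Fin 2) g) -
        eval ![x, y] (pderiv (1 : Fin 2) f) * eval ![x, y] (pderiv (0 : Fin 2) g) ≠ 0)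
    (h0f : eval ![(0 : ℝ), 0] f = 0) (h0g : eval ![(0 : ℝ), 0] g = 0) :
    ∀ x y : ℝ,
      (eval ![x, y] f * eval ![x, y] (pderiv (1 : Fin 2) f) +
          eval ![x, y] g * eval ![x, y] (pderiv (1 : Fin 2) g) = 0 ∧
        eval ![x, y] f * eval ![x, y] (pderiv (0 : Fin 2) f) +
          eval ![x, y] g * eval ![x, y] (pderiv (0 : Fin 2) g) = 0) ↔
      (eval ![x, y] f = 0 ∧ eval ![x, y] g = 0) := by
  intro x y
  set F := eval ![x, y] f with hF
  set G := eval ![x, y] g with hG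
  set fx := eval ![x, y] (pderiv (0 : Fin 2) f) with hfx
  set fy := eval ![x, y] (pderiv (1 : Fin 2) f) with hfy
  set gx := eval ![x, y] (pderiv (0 : Fin 2) g) with hgx
  set gy := eval ![x, y] (pderiv (1 : Fin 2) g) with hgy
  have hd : fx * gy - fy * gx ≠ 0 := hJ x y
  constructor
  · rintro ⟨h1, h2⟩
    have hf : F * (fx * gy - fy * gx) = 0 := by linear_combination gy * h2 - gx * h1
    have hg : G * (fx * gy - fy * gx) = 0 := by linear_combination fx * h1 - fy * h2
    exact ⟨(mul_eq_zero.mp hf).resolve_right hd, (mul_eq_zero.mp hg).resolve_right hd⟩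
  · rintro ⟨hf, hg⟩
    simp [hf, hg]
end

section
/- Let F : ℝⁿ → ℝⁿ be a C¹ map with det DF(x) ≠ 0 for all x ∈ ℝⁿ. Then F is a homeomorphism of ℝⁿ onto ℝⁿ (i.e. F is bijective with continuous inverse) if and only if ‖F(x)‖ → ∞ as ‖x‖ → ∞. -/
/-!
A `C¹` map with invertible derivative is a local homeomorphism by the inverse function theorem,
and the growth condition says exactly that it is proper. A proper local homeomorphism has
finite fibres and is closed, hence is a covering map; a covering map from a path-connected
space onto the simply connected `ℝⁿ` is injective, and its image is clopen, hence everything.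
-/

open Filter Set Topology Function

section Covering

variable {E X : Type*} [TopologicalSpace E] [TopologicalSpace X] {p : E → X}

theorem IsLocalHomeomorph.isCoveringMap_of_isProperMap [T2Space E] (hl : IsLocalHomeomorph p)
    (hp : IsProperMap p) : IsCoveringMap p := by
  have hfinite (x : X) : (p ⁻¹' {x}).Finite :=
    (hp.isCompact_preimage isCompact_singleton).finite <|
      .of_openPartialHomeomorph p subset_rfl fun e _ ↦
        (hl e).imp fun _ ⟨he, h⟩ ↦ ⟨he, h.symm⟩
  exact isCoveringMap_iff_isCoveringMapOn_univ.mpr <|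
    hp.isClosedMap.isCoveringMapOn_of_isLocalHomeomorphOn (fun x _ ↦ hfinite x) fun e _ ↦ hl e

theorem IsCoveringMap.injective_s11 [PathConnectedSpace E] [SimplyConnectedSpace X]
    (cov : IsCoveringMap p) : Injective p := by
  intro e₀ e₁ h
  -- A path from `e₀` to `e₁` lifts the null-homotopic loop `p ∘ γ`, whose lift must be closed.
  have hlift : cov.monodromy (.refl (p e₀)) ⟨e₀, rfl⟩ = ⟨e₁, h.symm⟩ :=
    cov.monodromy_eq_of_map_eq (.mk (PathConnectedSpace.somePath e₀ e₁)) (Subsingleton.elim _ _)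
  rw [cov.monodromy_refl] at hlift
  exact congrArg Subtype.val hlift

theorem IsProperMap.surjective_of_isOpenMap [Nonempty E] [ConnectedSpace X] (hp : IsProperMap p)
    (ho : IsOpenMap p) : Surjective p :=
  range_eq_univ.mp (IsClopen.eq_univ ⟨hp.isClosed_range, ho.isOpen_range⟩ (range_nonempty p))

theorem IsLocalHomeomorph.bijective_of_isProperMap [T2Space E] [PathConnectedSpace E]
    [SimplyConnectedSpace X] (hl : IsLocalHomeomorph p) (hp : IsProperMap p) : Bijective p :=
  ⟨(hl.isCoveringMap_of_isProperMap hp).injective_s11, hp.surjective_of_isOpenMap hl.isOpenMap⟩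

end Covering

theorem isProperMap_iff_tendsto_norm_cocompact_atTop {X E : Type*} [TopologicalSpace X]
    [NormedAddCommGroup E] [ProperSpace E] {f : X → E} :
    IsProperMap f ↔ Continuous f ∧ Tendsto (‖f ·‖) (cocompact X) atTop := by
  rw [isProperMap_iff_tendsto_cocompact, tendsto_norm_atTop_iff_cobounded,
    Metric.cobounded_eq_cocompact]

theorem ContDiff.isLocalHomeomorph_of_det_fderiv_ne_zero {𝕜 E : Type*} [RCLike 𝕜]
    [NormedAddCommGroup E] [NormedSpace 𝕜 E] [FiniteDimensional 𝕜 E] {f : E → E}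
    {n : WithTop ℕ∞} (hf : ContDiff 𝕜 n f) (hn : n ≠ 0)
    (hdet : ∀ x, LinearMap.det (fderiv 𝕜 f x).toLinearMap ≠ 0) : IsLocalHomeomorph f := by
  have := FiniteDimensional.complete 𝕜 E
  intro x
  let f' := (LinearMap.equivOfDetNeZero _ (hdet x)).toContinuousLinearEquiv
  have hf' : HasFDerivAt f (f' : E →L[𝕜] E) x := (hf.differentiable hn x).hasFDerivAt
  exact ⟨hf.contDiffAt.toOpenPartialHomeomorph f hf' hn,
    hf.contDiffAt.mem_toOpenPartialHomeomorph_source hf' hn, rfl⟩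

/-- **Hadamard-type criterion.** Let `F : ℝⁿ → ℝⁿ` be a `C¹` map with
`det DF(x) ≠ 0` everywhere. Then `F` is a homeomorphism of `ℝⁿ` onto `ℝⁿ` iff
`‖F x‖ → ∞` as `‖x‖ → ∞`. -/
theorem homeomorphism_iff_norm_proper (n : ℕ)
    (F : EuclideanSpace ℝ (Fin n) → EuclideanSpace ℝ (Fin n))
    (hC1 : ContDiff ℝ 1 F)
    (hJ : ∀ x : EuclideanSpace ℝ (Fin n), LinearMap.det (fderiv ℝ F x).toLinearMap ≠ 0) :
    (∃ e : EuclideanSpace ℝ (Fin n) ≃ₜ EuclideanSpace ℝ (Fin n), ⇑e = F) ↔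
      Tendsto (fun x => ‖F x‖) (cocompact (EuclideanSpace ℝ (Fin n))) atTop := by
  constructor
  · rintro ⟨e, rfl⟩
    exact (isProperMap_iff_tendsto_norm_cocompact_atTop.mp e.isProperMap).2
  · intro hF
    have hproper : IsProperMap F :=
      isProperMap_iff_tendsto_norm_cocompact_atTop.mpr ⟨hC1.continuous, hF⟩
    have hlocal : IsLocalHomeomorph F :=
      hC1.isLocalHomeomorph_of_det_fderiv_ne_zero one_ne_zero hJ
    exact ⟨hlocal.toHomeomorphOfBijective (hlocal.bijective_of_isProperMap hproper), rfl⟩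
end

section
/- Let s = (s₁,…,sₙ) be positive integers, let l be a filter on a set α, and let r : α → ℝ and y : α → ℝⁿ be functions with r(a) > 0 and Σ_{j=1}^{n} y_j(a)² = 1 for all a ∈ α. Setting x_j(a) = y_j(a) / r(a)^{s_j}, one has Σ_{j=1}^{n} x_j(a)² → +∞ along l if and only if r(a) → 0 along l. -/
/-!
Writing `u = r⁻¹`, the sum is `∑ⱼ yⱼ² u^(2 sⱼ)`, a convex combination of powers of `u` with
positive exponents. Once `u ≥ 1` it is squeezed between `u` and `u^N` for a common bound `N`
of the exponents, while for `u < 1` it is at most `1`; hence it tends to `+∞` exactly when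
`u` does, i.e. when `r → 0⁺`.
-/

open Filter Topology

section WeightedAverage

variable {ι R : Type*} [CommSemiring R] [PartialOrder R] [IsOrderedRing R] {s : Finset ι}
  {w f : ι → R} {c : R}

theorem Finset.sum_mul_le_of_le (hw : ∀ i ∈ s, 0 ≤ w i) (hw₁ : ∑ i ∈ s, w i = 1)
    (hf : ∀ i ∈ s, f i ≤ c) : ∑ i ∈ s, w i * f i ≤ c :=
  calc ∑ i ∈ s, w i * f i ≤ ∑ i ∈ s, w i * c :=
        Finset.sum_le_sum fun i hi => mul_le_mul_of_nonneg_left (hf i hi) (hw i hi)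
    _ = c := by rw [← Finset.sum_mul, hw₁, one_mul]

theorem Finset.le_sum_mul_of_le (hw : ∀ i ∈ s, 0 ≤ w i) (hw₁ : ∑ i ∈ s, w i = 1)
    (hf : ∀ i ∈ s, c ≤ f i) : c ≤ ∑ i ∈ s, w i * f i :=
  calc c = ∑ i ∈ s, w i * c := by rw [← Finset.sum_mul, hw₁, one_mul]
    _ ≤ ∑ i ∈ s, w i * f i :=
        Finset.sum_le_sum fun i hi => mul_le_mul_of_nonneg_left (hf i hi) (hw i hi)

end WeightedAverage

theorem Filter.Tendsto.of_pow_atTop {α : Type*} {l : Filter α} {u : α → ℝ} {N : ℕ}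
    (hN : N ≠ 0) (hu : ∀ a, 0 ≤ u a) (h : Tendsto (fun a => u a ^ N) l atTop) :
    Tendsto u l atTop := by
  have := (tendsto_rpow_atTop (inv_pos.2 (Nat.cast_pos.2 (Nat.pos_of_ne_zero hN)))).comp h
  simpa only [Function.comp_def, Real.pow_rpow_inv_natCast (hu _) hN] using this

theorem tendsto_inv_atTop_iff_tendsto_zero {α 𝕜 : Type*} [Field 𝕜] [LinearOrder 𝕜]
    [IsStrictOrderedRing 𝕜] [TopologicalSpace 𝕜] [OrderTopology 𝕜] {l : Filter α} {r : α → 𝕜}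
    (hr : ∀ a, 0 < r a) : Tendsto (fun a => (r a)⁻¹) l atTop ↔ Tendsto r l (𝓝 0) := by
  refine ⟨fun h => ?_, fun h => ?_⟩
  · simpa only [Pi.inv_def, inv_inv] using h.inv_tendsto_atTop
  · exact Tendsto.inv_tendsto_nhdsGT_zero
      (tendsto_nhdsWithin_iff.2 ⟨h, Eventually.of_forall hr⟩)

section ConvexCombinationOfPowers

variable {α ι : Type*} [Fintype ι] {l : Filter α} {w : α → ι → ℝ} {u : α → ℝ} {e : ι → ℕ}

theorem tendsto_sum_mul_pow_atTop_iff (hw : ∀ a i, 0 ≤ w a i) (hw₁ : ∀ a, ∑ i, w a i = 1)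
    (hu : ∀ a, 0 ≤ u a) (he : ∀ i, e i ≠ 0) :
    Tendsto (fun a => ∑ i, w a i * u a ^ e i) l atTop ↔ Tendsto u l atTop := by
  have hw' : ∀ a, ∀ i ∈ Finset.univ, 0 ≤ w a i := fun a i _ => hw a i
  obtain ⟨N, hN⟩ : ∃ N, ∀ i, e i ≤ N := ⟨Finset.univ.sup e, fun i => Finset.le_sup (by simp)⟩
  constructor
  · intro h
    have hle_one : ∀ a, u a < 1 → ∑ i, w a i * u a ^ e i ≤ 1 := fun a ha =>
      Finset.sum_mul_le_of_le (hw' a) (hw₁ a) fun i _ => pow_le_one₀ (hu a) ha.le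
    refine Tendsto.of_pow_atTop N.succ_ne_zero hu (tendsto_atTop_mono' l ?_ h)
    filter_upwards [h.eventually_gt_atTop 1] with a ha
    have hu₁ : 1 ≤ u a := not_lt.1 fun hlt => (hle_one a hlt).not_gt ha
    exact Finset.sum_mul_le_of_le (hw' a) (hw₁ a) fun i _ =>
      pow_le_pow_right₀ hu₁ ((hN i).trans N.le_succ)
  · intro h
    refine tendsto_atTop_mono' l ?_ h
    filter_upwards [h.eventually_ge_atTop 1] with a hu₁
    exact Finset.le_sum_mul_of_le (hw' a) (hw₁ a) fun i _ => le_self_pow₀ hu₁ (he i)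

end ConvexCombinationOfPowers

/-- Let `s = (s₁,…,sₙ)` be positive integers, `l` a filter on `α`, and
`r : α → ℝ`, `y : α → ℝⁿ` with `r a > 0` and `Σ_j y_j(a)² = 1` for all `a`. Setting
`x_j(a) = y_j(a) / r(a)^{s_j}`, one has `Σ_j x_j(a)² → +∞` along `l` iff `r(a) → 0`
along `l`. -/
theorem sum_sq_tendsto_atTop_iff_tendsto_zero {α : Type*} (n : ℕ) (s : Fin n → ℕ)
    (hs : ∀ j, 0 < s j) (l : Filter α) (r : α → ℝ) (y : α → Fin n → ℝ)
    (hr : ∀ a, 0 < r a) (hy : ∀ a, ∑ j : Fin n, (y a j) ^ 2 = 1) :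
    Tendsto (fun a => ∑ j : Fin n, (y a j / (r a) ^ s j) ^ 2) l atTop ↔
      Tendsto r l (nhds 0) := by
  have hsum : ∀ a, ∑ j, (y a j / r a ^ s j) ^ 2 = ∑ j, y a j ^ 2 * (r a)⁻¹ ^ (2 * s j) :=
    fun a => Finset.sum_congr rfl fun j _ => by rw [div_pow, div_eq_mul_inv, pow_mul', inv_pow, inv_pow]
  simp only [hsum]
  rw [tendsto_sum_mul_pow_atTop_iff (fun a j => sq_nonneg (y a j)) hy
      (fun a => (inv_pos.2 (hr a)).le) (fun j => by have := hs j; omega),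
    tendsto_inv_atTop_iff_tendsto_zero hr]
end
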